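/- arXiv:1306.6012 — 2 statements merged into one kernel-verified Lean document; each statement's English description precedes it below -/
import Mathlib

section
/- For all distinct i, j ∈ {1,2,3}, the product μ_i·μ_j divides μ. -/
noncomputable section

/-- The coercion of an integer vector in `ℤ³` to `ℝ³`. -/
def coe3 (v : Fin 3 → ℤ) : Fin 3 → ℝ := fun i => (v i : ℝ)

/-- A vector of `ℤ³` is primitive if the greatest common divisor of its components is 1. -/
def IsPrimitive (v : Fin 3 → ℤ) : Prop := Int.gcd (v 0) (Int.gcd (v 1) (v 2)) = 1

/-- The fundamental parallelepiped spanned by two vectors: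
`◊(a,b) = {s•a + t•b : s,t ∈ [0,1)}`. -/
def para2 (a b : Fin 3 → ℝ) : Set (Fin 3 → ℝ) :=
  {x | ∃ s t : ℝ, 0 ≤ s ∧ s < 1 ∧ 0 ≤ t ∧ t < 1 ∧ x = s • a + t • b}

/-- The fundamental parallelepiped spanned by three vectors:
`◊(a,b,c) = {s•a + t•b + u•c : s,t,u ∈ [0,1)}`. -/
def para3 (a b c : Fin 3 → ℝ) : Set (Fin 3 → ℝ) :=
  {x | ∃ s t u : ℝ, 0 ≤ s ∧ s < 1 ∧ 0 ≤ t ∧ t < 1 ∧ 0 ≤ u ∧ u < 1 ∧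
    x = s • a + t • b + u • c}

/-- The integral points `ℤ³ ∩ ◊(a,b)` of a two-dimensional fundamental parallelepiped. -/
def H2pts (a b : Fin 3 → ℤ) : Set (Fin 3 → ℤ) := {x | coe3 x ∈ para2 (coe3 a) (coe3 b)}

/-- The integral points `ℤ³ ∩ ◊(a,b,c)` of a three-dimensional fundamental parallelepiped. -/
def H3pts (a b c : Fin 3 → ℤ) : Set (Fin 3 → ℤ) :=
  {x | coe3 x ∈ para3 (coe3 a) (coe3 b) (coe3 c)}

/-!
Put `Λ = ℤu + ℤv + ℤw`. Reducing real coordinates modulo `1` shows that `x ↦ x + Λ` maps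
`ℤ³ ∩ ◊(u,v,w)` bijectively onto `ℤ³/Λ`, and `ℤ³ ∩ ◊(v,w)` bijectively onto the image `A` in
`ℤ³/Λ` of the integer points of the plane `ℝv + ℝw`; likewise `ℤ³ ∩ ◊(u,w)` onto the image `B`
of the integer points of `ℝu + ℝw`. The two planes meet in the line `ℝw`, whose integer points
form `ℤw ⊆ Λ` because `w` is primitive, so `A ∩ B = 0`. Hence `A` embeds in `(ℤ³/Λ)/B`, and
Lagrange gives `#A · #B ∣ #(ℤ³/Λ)`.
-/

open Submodule

lemma LinearIndependent.eq_of_triple {R M : Type*} [Semiring R] [AddCommMonoid M] [Module R M]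
    {x y z : M} (h : LinearIndependent R ![x, y, z]) {a b c a' b' c' : R}
    (h' : a • x + b • y + c • z = a' • x + b' • y + c' • z) : a = a' ∧ b = b' ∧ c = c' := by
  have := Fintype.linearIndependent_iffₛ.mp h ![a, b, c] ![a', b', c']
    (by simpa [Fin.sum_univ_three, add_assoc] using h')
  exact ⟨this 0, this 1, this 2⟩

lemma LinearIndependent.exists_eq_of_triple {K V : Type*} [DivisionRing K] [AddCommGroup V]
    [Module K V] (hV : Module.finrank K V = 3) {x y z : V} (h : LinearIndependent K ![x, y, z])
    (t : V) : ∃ a b c : K, t = a • x + b • y + c • z := by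
  have ht : t ∈ span K (Set.range ![x, y, z]) := by
    rw [h.span_eq_top_of_card_eq_finrank (by simp [hV])]; trivial
  obtain ⟨f, hf⟩ := (mem_span_range_iff_exists_fun K).mp ht
  exact ⟨f 0, f 1, f 2, by simp [← hf, Fin.sum_univ_three]⟩

lemma LinearIndependent.rotate_three {R M : Type*} [Semiring R] [AddCommMonoid M] [Module R M]
    {x y z : M} (h : LinearIndependent R ![x, y, z]) : LinearIndependent R ![y, z, x] := by
  convert h.comp _ (finRotate 3).injective
  ext i; fin_cases i <;> rfl

lemma LinearIndependent.swap_three {R M : Type*} [Semiring R] [AddCommMonoid M] [Module R M]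
    {x y z : M} (h : LinearIndependent R ![x, y, z]) : LinearIndependent R ![y, x, z] := by
  convert h.comp _ (Equiv.swap (0 : Fin 3) 1).injective
  ext i; fin_cases i <;> rfl

lemma AddSubgroup.card_mul_card_dvd_of_inf_eq_bot {G : Type*} [AddGroup G]
    {H K : AddSubgroup G} [K.Normal] (h : H ⊓ K = ⊥) : Nat.card H * Nat.card K ∣ Nat.card G := by
  have hinj : Function.Injective ((QuotientAddGroup.mk' K).comp H.subtype) := by
    refine (injective_iff_map_eq_zero _).mpr fun x hx => ?_
    have hxK : (x : G) ∈ H ⊓ K := ⟨x.2, (QuotientAddGroup.eq_zero_iff _).mp hx⟩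
    simpa [h] using hxK
  rw [K.card_eq_card_quotient_mul_card_addSubgroup]
  exact mul_dvd_mul_right (card_dvd_of_injective _ hinj) _

lemma Int.eq_zero_of_cast_eq_sub_of_mem_Ico {α : Type*} [CommRing α] [LinearOrder α]
    [IsStrictOrderedRing α] {a : ℤ} {s t : α} (hs : s ∈ Set.Ico 0 1) (ht : t ∈ Set.Ico 0 1)
    (h : (a : α) = s - t) : a = 0 := by
  have : |(a : α)| < 1 := by rw [h, abs_lt]; constructor <;> linarith [hs.1, hs.2, ht.1, ht.2]
  exact Int.abs_lt_one_iff.mp (by exact_mod_cast this)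

lemma coe3_sub (x y : Fin 3 → ℤ) : coe3 (x - y) = coe3 x - coe3 y := by
  ext i; simp [coe3]

lemma coe3_add (x y : Fin 3 → ℤ) : coe3 (x + y) = coe3 x + coe3 y := by
  ext i; simp [coe3]

lemma coe3_zsmul (a : ℤ) (x : Fin 3 → ℤ) : coe3 (a • x) = (a : ℝ) • coe3 x := by
  ext i; simp [coe3]

lemma coe3_zsmul_add_zsmul_add_zsmul (a b c : ℤ) (x y z : Fin 3 → ℤ) :
    coe3 (a • x + b • y + c • z) = (a : ℝ) • coe3 x + (b : ℝ) • coe3 y + (c : ℝ) • coe3 z := by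
  simp only [coe3_add, coe3_zsmul]

lemma IsPrimitive.exists_bezout {w : Fin 3 → ℤ} (hw : IsPrimitive w) :
    ∃ a b c : ℤ, a * w 0 + b * w 1 + c * w 2 = 1 := by
  obtain ⟨a, d, had⟩ := Int.isCoprime_iff_gcd_eq_one.mpr hw
  refine ⟨a, d * Int.gcdA (w 1) (w 2), d * Int.gcdB (w 1) (w 2), ?_⟩
  rw [← had, Int.gcd_eq_gcd_ab (w 1) (w 2)]
  ring

lemma IsPrimitive.exists_eq_zsmul {w z : Fin 3 → ℤ} (hw : IsPrimitive w) {γ : ℝ}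
    (h : coe3 z = γ • coe3 w) : ∃ m : ℤ, z = m • w := by
  obtain ⟨a, b, c, habc⟩ := hw.exists_bezout
  have hz : ∀ i, (z i : ℝ) = γ * w i := fun i => congrFun h i
  have habcR : (a : ℝ) * w 0 + b * w 1 + c * w 2 = 1 := by exact_mod_cast habc
  have hγ : ((a * z 0 + b * z 1 + c * z 2 : ℤ) : ℝ) = γ := by
    push_cast
    rw [hz, hz, hz]
    linear_combination γ * habcR
  refine ⟨a * z 0 + b * z 1 + c * z 2, funext fun i => Int.cast_injective (α := ℝ) ?_⟩
  simp [hγ, hz]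

def coe3Linear : (Fin 3 → ℤ) →ₗ[ℤ] (Fin 3 → ℝ) := (Int.castAddHom ℝ).toIntLinearMap.compLeft _

def integerPlane (v w : Fin 3 → ℤ) : Submodule ℤ (Fin 3 → ℤ) :=
  ((span ℝ {coe3 v, coe3 w}).restrictScalars ℤ).comap coe3Linear

lemma mem_integerPlane {v w x : Fin 3 → ℤ} :
    x ∈ integerPlane v w ↔ ∃ s t : ℝ, s • coe3 v + t • coe3 w = coe3 x :=
  mem_span_pair

section Lattice

variable {u v w : Fin 3 → ℤ}

lemma injOn_mkQ_H3pts (hli : LinearIndependent ℝ ![coe3 u, coe3 v, coe3 w]) :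
    Set.InjOn (span ℤ {u, v, w}).mkQ (H3pts u v w) := by
  rintro x ⟨p, q, r, hp0, hp1, hq0, hq1, hr0, hr1, hx⟩
    y ⟨p', q', r', hp0', hp1', hq0', hq1', hr0', hr1', hy⟩ hxy
  obtain ⟨a, b, c, habc⟩ := mem_span_triple.mp ((Submodule.Quotient.eq _).mp hxy)
  have hcoe : (a : ℝ) • coe3 u + (b : ℝ) • coe3 v + (c : ℝ) • coe3 w =
      (p - p') • coe3 u + (q - q') • coe3 v + (r - r') • coe3 w := by
    rw [← coe3_zsmul_add_zsmul_add_zsmul, habc, coe3_sub, hx, hy]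
    module
  obtain ⟨ha, hb, hc⟩ := hli.eq_of_triple hcoe
  rw [← sub_eq_zero, ← habc, Int.eq_zero_of_cast_eq_sub_of_mem_Ico ⟨hp0, hp1⟩ ⟨hp0', hp1'⟩ ha,
    Int.eq_zero_of_cast_eq_sub_of_mem_Ico ⟨hq0, hq1⟩ ⟨hq0', hq1'⟩ hb,
    Int.eq_zero_of_cast_eq_sub_of_mem_Ico ⟨hr0, hr1⟩ ⟨hr0', hr1'⟩ hc]
  simp

lemma exists_sub_mem_span_coe3_eq_fract (x : Fin 3 → ℤ) {p q r : ℝ}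
    (hx : coe3 x = p • coe3 u + q • coe3 v + r • coe3 w) :
    ∃ y, x - y ∈ span ℤ {u, v, w} ∧
      coe3 y = Int.fract p • coe3 u + Int.fract q • coe3 v + Int.fract r • coe3 w := by
  refine ⟨x - (⌊p⌋ • u + ⌊q⌋ • v + ⌊r⌋ • w), mem_span_triple.mpr ⟨⌊p⌋, ⌊q⌋, ⌊r⌋, by abel⟩, ?_⟩
  rw [coe3_sub, coe3_zsmul_add_zsmul_add_zsmul, hx, Int.fract, Int.fract, Int.fract]
  module

lemma H2pts_subset_H3pts : H2pts v w ⊆ H3pts u v w := by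
  rintro x ⟨s, t, hs0, hs1, ht0, ht1, hx⟩
  exact ⟨0, s, t, le_rfl, zero_lt_one, hs0, hs1, ht0, ht1, by simpa using hx⟩

lemma mkQ_image_H3pts (hli : LinearIndependent ℝ ![coe3 u, coe3 v, coe3 w]) :
    (span ℤ {u, v, w}).mkQ '' H3pts u v w = Set.univ := by
  refine Set.eq_univ_of_forall fun g => ?_
  obtain ⟨x, rfl⟩ := (span ℤ {u, v, w}).mkQ_surjective g
  obtain ⟨p, q, r, hx⟩ := hli.exists_eq_of_triple (by simp) (coe3 x)
  obtain ⟨y, hxy, hy⟩ := exists_sub_mem_span_coe3_eq_fract x hx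
  refine ⟨y, ⟨_, _, _, Int.fract_nonneg p, Int.fract_lt_one p, Int.fract_nonneg q,
    Int.fract_lt_one q, Int.fract_nonneg r, Int.fract_lt_one r, hy⟩, ?_⟩
  exact ((Submodule.Quotient.eq _).mpr hxy).symm

lemma mkQ_image_H2pts :
    (span ℤ {u, v, w}).mkQ '' H2pts v w = (integerPlane v w).map (span ℤ {u, v, w}).mkQ := by
  refine subset_antisymm (Set.image_mono fun x ⟨s, t, _, _, _, _, hx⟩ =>
    mem_integerPlane.mpr ⟨s, t, hx.symm⟩) ?_
  rintro _ ⟨x, hx, rfl⟩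
  obtain ⟨s, t, hst⟩ := mem_integerPlane.mp hx
  obtain ⟨y, hxy, hy⟩ := exists_sub_mem_span_coe3_eq_fract (u := u) (v := v) (w := w) x (p := 0)
    (by rw [← hst, zero_smul, zero_add])
  refine ⟨y, ⟨_, _, Int.fract_nonneg s, Int.fract_lt_one s, Int.fract_nonneg t,
    Int.fract_lt_one t, by simpa using hy⟩, ((Submodule.Quotient.eq _).mpr hxy).symm⟩

lemma ncard_H3pts (hli : LinearIndependent ℝ ![coe3 u, coe3 v, coe3 w]) :
    (H3pts u v w).ncard = Nat.card ((Fin 3 → ℤ) ⧸ span ℤ {u, v, w}) := by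
  rw [← (injOn_mkQ_H3pts hli).ncard_image, mkQ_image_H3pts hli, Set.ncard_univ]

lemma ncard_H2pts (hli : LinearIndependent ℝ ![coe3 u, coe3 v, coe3 w]) :
    (H2pts v w).ncard = Nat.card ((integerPlane v w).map (span ℤ {u, v, w}).mkQ) := by
  rw [← ((injOn_mkQ_H3pts hli).mono H2pts_subset_H3pts).ncard_image, mkQ_image_H2pts]
  rfl

lemma map_mkQ_integerPlane_inf_eq_bot (hli : LinearIndependent ℝ ![coe3 u, coe3 v, coe3 w])
    (hw : IsPrimitive w) :
    (integerPlane v w).map (span ℤ {u, v, w}).mkQ ⊓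
      (integerPlane u w).map (span ℤ {u, v, w}).mkQ = ⊥ := by
  rw [eq_bot_iff]
  rintro _ ⟨⟨x, hx, rfl⟩, ⟨y, hy, hyx⟩⟩
  obtain ⟨β, γ, hx⟩ := mem_integerPlane.mp hx
  obtain ⟨α, δ, hy⟩ := mem_integerPlane.mp hy
  obtain ⟨a, b, c, habc⟩ := mem_span_triple.mp ((Submodule.Quotient.eq _).mp hyx)
  -- Comparing `v`-coefficients in `y - x ∈ Λ` puts `x + b • v` on the line `ℝw`.
  have hb : (b : ℝ) = -β := by
    refine (hli.eq_of_triple (a := a) (b := b) (c := c) (a' := α) (b' := -β) (c' := δ - γ) ?_).2.1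
    rw [← coe3_zsmul_add_zsmul_add_zsmul, habc, coe3_sub, ← hx, ← hy]
    module
  obtain ⟨m, hm⟩ := hw.exists_eq_zsmul (z := x + b • v) (γ := γ) (by
    rw [coe3_add, coe3_zsmul, hb, ← hx]
    module)
  rw [mem_bot, mkQ_apply, Quotient.mk_eq_zero, mem_span_triple]
  exact ⟨0, -b, m, by rw [← hm, zero_smul, neg_smul]; abel⟩

lemma ncard_H2pts_mul_ncard_H2pts_dvd (hli : LinearIndependent ℝ ![coe3 u, coe3 v, coe3 w])
    (hw : IsPrimitive w) :
    (H2pts v w).ncard * (H2pts u w).ncard ∣ (H3pts u v w).ncard := by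
  have hu := ncard_H2pts hli.swap_three
  rw [Set.insert_comm] at hu
  rw [ncard_H2pts hli, hu, ncard_H3pts hli]
  exact AddSubgroup.card_mul_card_dvd_of_inf_eq_bot
    (H := ((integerPlane v w).map (span ℤ {u, v, w}).mkQ).toAddSubgroup)
    (K := ((integerPlane u w).map (span ℤ {u, v, w}).mkQ).toAddSubgroup)
    (by rw [← bot_toAddSubgroup (R := ℤ), ← map_mkQ_integerPlane_inf_eq_bot hli hw]; rfl)

end Lattice

lemma H2pts_comm (a b : Fin 3 → ℤ) : H2pts a b = H2pts b a := by
  ext z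
  constructor <;> rintro ⟨s, t, hs0, hs1, ht0, ht1, hz⟩ <;>
    exact ⟨t, s, ht0, ht1, hs0, hs1, by rw [hz, add_comm]⟩

lemma H3pts_rotate (a b c : Fin 3 → ℤ) : H3pts a b c = H3pts b c a := by
  ext z
  constructor
  · rintro ⟨r, s, t, hr0, hr1, hs0, hs1, ht0, ht1, hz⟩
    exact ⟨s, t, r, hs0, hs1, ht0, ht1, hr0, hr1, by rw [hz]; abel⟩
  · rintro ⟨r, s, t, hr0, hr1, hs0, hs1, ht0, ht1, hz⟩
    exact ⟨t, r, s, ht0, ht1, hr0, hr1, hs0, hs1, by rw [hz]; abel⟩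

theorem products_of_multiplicities_divide_general (w₁ w₂ w₃ : Fin 3 → ℤ)
    (hp₁ : IsPrimitive w₁) (hp₂ : IsPrimitive w₂) (hp₃ : IsPrimitive w₃)
    (hli : LinearIndependent ℝ ![coe3 w₁, coe3 w₂, coe3 w₃]) :
    (H2pts w₂ w₃).ncard * (H2pts w₁ w₃).ncard ∣ (H3pts w₁ w₂ w₃).ncard ∧
    (H2pts w₂ w₃).ncard * (H2pts w₁ w₂).ncard ∣ (H3pts w₁ w₂ w₃).ncard ∧
    (H2pts w₁ w₃).ncard * (H2pts w₁ w₂).ncard ∣ (H3pts w₁ w₂ w₃).ncard := by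
  refine ⟨ncard_H2pts_mul_ncard_H2pts_dvd hli hp₃, ?_, ?_⟩
  · have h := ncard_H2pts_mul_ncard_H2pts_dvd hli.rotate_three.rotate_three hp₂
    rwa [H2pts_comm w₃ w₂, ← H3pts_rotate, ← H3pts_rotate, mul_comm] at h
  · have h := ncard_H2pts_mul_ncard_H2pts_dvd hli.rotate_three hp₁
    rwa [H2pts_comm w₃ w₁, H2pts_comm w₂ w₁, ← H3pts_rotate] at h

/-- For all distinct `i, j ∈ {1,2,3}`, the product `μ_i·μ_j` divides `μ`. -/
theorem products_of_multiplicities_divide (w₁ w₂ w₃ : Fin 3 → ℤ)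
    (hnn₁ : ∀ i, 0 ≤ w₁ i) (hnn₂ : ∀ i, 0 ≤ w₂ i) (hnn₃ : ∀ i, 0 ≤ w₃ i)
    (hp₁ : IsPrimitive w₁) (hp₂ : IsPrimitive w₂) (hp₃ : IsPrimitive w₃)
    (hli : LinearIndependent ℝ ![coe3 w₁, coe3 w₂, coe3 w₃]) :
    (H2pts w₂ w₃).ncard * (H2pts w₁ w₃).ncard ∣ (H3pts w₁ w₂ w₃).ncard ∧
    (H2pts w₂ w₃).ncard * (H2pts w₁ w₂).ncard ∣ (H3pts w₁ w₂ w₃).ncard ∧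
    (H2pts w₁ w₃).ncard * (H2pts w₁ w₂).ncard ∣ (H3pts w₁ w₂ w₃).ncard :=
  products_of_multiplicities_divide_general w₁ w₂ w₃ hp₁ hp₂ hp₃ hli

end
end

section
/- For every h ∈ H, writing h = h₁w₁ + h₂w₂ + h₃w₃ with h₁, h₂, h₃ ∈ [0,1), the coordinate h₁ belongs to the set {0, μ₁/μ, 2μ₁/μ, …, (μ−μ₁)/μ}; moreover, for each l ∈ {0, 1, …, μ/μ₁ − 1}, exactly μ₁ points h ∈ H satisfy h₁ = lμ₁/μ. (The analogous statements hold for the coordinates h₂ with μ₂ and h₃ with μ₃.) -/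
/-! The edges `w₁, w₂, w₃` span a sublattice `L` of `ℤ³`, and `H` is a system of representatives
of `ℤ³ ⧸ L`, so `μ = #(ℤ³ ⧸ L)`. Reading the first coordinate modulo `1` is a homomorphism
`ℤ³ ⧸ L → ℝ ⧸ ℤ` whose kernel is represented by `H₁`. Its image therefore has order
`n = μ / μ₁`, and a subgroup of order `n` of the circle is its `n`-torsion `{l / n}`; each fibre
is a coset of the kernel, of size `μ₁`. -/

noncomputable section

open Module Submodule

namespace AddCircle

variable {𝕜 : Type*} [Field 𝕜] [LinearOrder 𝕜] [IsStrictOrderedRing 𝕜] {p : 𝕜}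

theorem coe_addSubgroup_eq_torsion (S : AddSubgroup (AddCircle p)) [Finite S] :
    (S : Set (AddCircle p)) = {u | Nat.card S • u = 0} := by
  have hn : 0 < Nat.card S := Nat.card_pos
  have hsub : (S : Set (AddCircle p)) ⊆ {u | Nat.card S • u = 0} := fun u hu ↦ by
    have h := congrArg Subtype.val (card_nsmul_eq_zero' (G := S) (x := ⟨u, hu⟩))
    rwa [AddSubgroup.coe_nsmul] at h
  refine (Set.toFinite _).eq_of_subset_of_encard_le hsub ?_
  calc {u : AddCircle p | Nat.card S • u = 0}.encard ≤ Nat.card S :=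
        card_torsion_le_of_isSMulRegular p _ hn.ne' <|
          .of_right_eq_zero_of_smul fun _ ↦ by simp [hn.ne']
    _ = (S : Set (AddCircle p)).encard := by
        rw [← (Set.toFinite _).cast_ncard_eq, ← Nat.card_coe_set_eq, SetLike.coe_sort_coe]

theorem mem_addSubgroup_iff [Fact (0 < p)] (S : AddSubgroup (AddCircle p)) [Finite S]
    {u : AddCircle p} : u ∈ S ↔ ∃ m < Nat.card S, ((m / Nat.card S * p : 𝕜) : AddCircle p) = u := by
  rw [← SetLike.mem_coe, coe_addSubgroup_eq_torsion, Set.mem_ofPred_eq,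
    AddCircle.nsmul_eq_zero_iff Nat.card_pos]

end AddCircle

theorem AddMonoidHom.mem_range_iff_of_addCircle {Q : Type*} [AddCommGroup Q] [Finite Q]
    (f : Q →+ AddCircle (1 : ℝ)) {u : AddCircle (1 : ℝ)} :
    u ∈ f.range ↔ ∃ l < Nat.card Q / Nat.card f.ker,
      ((((l * Nat.card f.ker : ℕ) : ℝ) / Nat.card Q : ℝ) : AddCircle (1 : ℝ)) = u := by
  have hcard : Nat.card f.ker * Nat.card f.range = Nat.card Q := by
    rw [← f.ker.card_mul_index, AddSubgroup.index_ker]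
  have hker : (Nat.card f.ker : ℝ) ≠ 0 := Nat.cast_ne_zero.mpr Nat.card_pos.ne'
  have : Finite f.range := .of_surjective _ f.rangeRestrict_surjective
  rw [AddCircle.mem_addSubgroup_iff, ← hcard, Nat.mul_div_cancel_left _ Nat.card_pos]
  refine exists_congr fun l ↦ and_congr_right fun _ ↦ ?_
  push_cast
  rw [mul_one, mul_comm (Nat.card f.ker : ℝ), mul_div_mul_right _ _ hker]

theorem Nat.cast_mul_div_mem_Ico {l K N : ℕ} (hK : 0 < K) (hl : l < N / K) :
    ((l * K : ℕ) : ℝ) / N ∈ Set.Ico 0 1 := by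
  have hlt : l * K < N := by
    have := (Nat.le_div_iff_mul_le hK).mp hl
    rw [Nat.succ_mul] at this
    omega
  have hN : (0 : ℝ) < N := by exact_mod_cast (Nat.zero_le _).trans_lt hlt
  exact ⟨by positivity, (div_lt_one hN).mpr (by exact_mod_cast hlt)⟩

theorem AddMonoidHom.coe_mem_range_iff_of_addCircle {Q : Type*} [AddCommGroup Q] [Finite Q]
    (f : Q →+ AddCircle (1 : ℝ)) {t : ℝ} (ht : t ∈ Set.Ico 0 1) :
    (t : AddCircle (1 : ℝ)) ∈ f.range ↔ ∃ l < Nat.card Q / Nat.card f.ker,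
      t = ((l * Nat.card f.ker : ℕ) : ℝ) / Nat.card Q := by
  rw [f.mem_range_iff_of_addCircle]
  refine exists_congr fun l ↦ and_congr_right fun hl ↦ ?_
  rw [eq_comm, AddCircle.coe_eq_coe_iff_of_mem_Ico (a := 0) (by rwa [zero_add]) <| by
    rw [zero_add]; exact Nat.cast_mul_div_mem_Ico Nat.card_pos hl]

namespace ZSpan

variable {ι E A : Type*} [NormedAddCommGroup E] [NormedSpace ℝ E] [AddCommGroup A]
  (b : Basis ι ℝ E) (j : A →+ E)

def preimageLattice : AddSubgroup A := (span ℤ (Set.range b)).toAddSubgroup.comap j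

def coordCircle (i : ι) : A ⧸ preimageLattice b j →+ AddCircle (1 : ℝ) :=
  QuotientAddGroup.lift _ ((QuotientAddGroup.mk' _).comp ((b.coord i).toAddMonoidHom.comp j))
    fun x hx ↦ by
      obtain ⟨z, hz⟩ := (b.mem_span_iff_repr_mem ℤ (j x)).mp hx i
      simp [← hz]

variable {b j}

theorem mem_preimageLattice {x : A} : x ∈ preimageLattice b j ↔ j x ∈ span ℤ (Set.range b) :=
  Iff.rfl

theorem coordCircle_mk (i : ι) (x : A) :
    coordCircle b j i (x : A ⧸ preimageLattice b j) = (b.repr (j x) i : AddCircle (1 : ℝ)) :=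
  rfl

variable [Fintype ι]

theorem bijOn_mk_preimage_fundamentalDomain (hj : Function.Injective j)
    (hb : ∀ i, b i ∈ Set.range j) :
    Set.BijOn (QuotientAddGroup.mk : A → A ⧸ preimageLattice b j)
      (j ⁻¹' fundamentalDomain b) Set.univ := by
  refine ⟨Set.mapsTo_univ _ _, fun x hx y hy hxy ↦ hj ?_, fun q _ ↦ ?_⟩
  · rw [QuotientAddGroup.eq, mem_preimageLattice, map_add, map_neg, ← fract_eq_fract] at hxy
    rwa [fract_eq_self.mpr hx, fract_eq_self.mpr hy] at hxy
  · obtain ⟨x, rfl⟩ := QuotientAddGroup.mk_surjective q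
    have hspan : span ℤ (Set.range b) ≤ j.range.toIntSubmodule :=
      span_le.mpr (Set.range_subset_iff.mpr hb)
    obtain ⟨y, hy⟩ := hspan (floor b (j x)).2
    refine ⟨x - y, ?_, ?_⟩
    · rw [Set.mem_preimage, map_sub, hy, ← fract_apply]
      exact fract_mem_fundamentalDomain b _
    · rw [QuotientAddGroup.eq, mem_preimageLattice, show -(x - y) + x = y by abel, hy]
      exact (floor b (j x)).2

theorem bijOn_mk_repr_eq (hj : Function.Injective j) (hb : ∀ i, b i ∈ Set.range j) (i : ι)
    {t : ℝ} (ht : t ∈ Set.Ico 0 1) :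
    Set.BijOn (QuotientAddGroup.mk : A → A ⧸ preimageLattice b j)
      {x ∈ j ⁻¹' fundamentalDomain b | b.repr (j x) i = t}
      (coordCircle b j i ⁻¹' {(t : AddCircle (1 : ℝ))}) := by
  have hbij := bijOn_mk_preimage_fundamentalDomain hj hb
  refine ⟨fun x hx ↦ ?_, hbij.injOn.mono fun x hx ↦ hx.1, fun q hq ↦ ?_⟩
  · simp [coordCircle_mk, hx.2]
  · obtain ⟨x, hx, rfl⟩ := hbij.surjOn (Set.mem_univ q)
    refine ⟨x, ⟨hx, ?_⟩, rfl⟩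
    rw [← zero_add (1 : ℝ)] at ht
    exact (AddCircle.coe_eq_coe_iff_of_mem_Ico (by simpa using hx i) ht).mp hq

theorem ncard_repr_eq_card_preimage (hj : Function.Injective j) (hb : ∀ i, b i ∈ Set.range j)
    (i : ι) {t : ℝ} (ht : t ∈ Set.Ico 0 1) :
    {x ∈ j ⁻¹' fundamentalDomain b | b.repr (j x) i = t}.ncard =
      Nat.card (coordCircle b j i ⁻¹' {(t : AddCircle (1 : ℝ))}) :=
  (bijOn_mk_repr_eq hj hb i ht).ncard_eq.trans (Nat.card_coe_set_eq _).symm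

theorem card_quotient_preimageLattice (hj : Function.Injective j)
    (hb : ∀ i, b i ∈ Set.range j) :
    Nat.card (A ⧸ preimageLattice b j) = (j ⁻¹' fundamentalDomain b).ncard := by
  rw [(bijOn_mk_preimage_fundamentalDomain hj hb).ncard_eq, Set.ncard_univ]

theorem card_ker_coordCircle (hj : Function.Injective j) (hb : ∀ i, b i ∈ Set.range j) (i : ι) :
    Nat.card (coordCircle b j i).ker =
      {x ∈ j ⁻¹' fundamentalDomain b | b.repr (j x) i = 0}.ncard := by
  rw [ncard_repr_eq_card_preimage hj hb i ⟨le_rfl, one_pos⟩, QuotientAddGroup.mk_zero,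
    ← AddMonoidHom.coe_ker]
  exact Nat.card_coe_set_eq _

theorem finite_quotient_preimageLattice (hj : Function.Injective j) (hb : ∀ i, b i ∈ Set.range j)
    (hfin : (j ⁻¹' fundamentalDomain b).Finite) : Finite (A ⧸ preimageLattice b j) :=
  Set.finite_univ_iff.mp ((bijOn_mk_preimage_fundamentalDomain hj hb).image_eq ▸ hfin.image _)

variable {N K : ℕ} {i : ι}

theorem exists_repr_eq_mul_div (hj : Function.Injective j) (hb : ∀ i, b i ∈ Set.range j)
    (hfin : (j ⁻¹' fundamentalDomain b).Finite) (hN : (j ⁻¹' fundamentalDomain b).ncard = N)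
    (hK : {x ∈ j ⁻¹' fundamentalDomain b | b.repr (j x) i = 0}.ncard = K)
    {x : A} (hx : j x ∈ fundamentalDomain b) :
    ∃ l < N / K, b.repr (j x) i = ((l * K : ℕ) : ℝ) / N := by
  have := finite_quotient_preimageLattice hj hb hfin
  rw [← hN, ← hK, ← card_quotient_preimageLattice hj hb, ← card_ker_coordCircle hj hb]
  exact ((coordCircle b j i).coe_mem_range_iff_of_addCircle (hx i)).mp ⟨x, rfl⟩

theorem ncard_repr_eq_mul_div (hj : Function.Injective j) (hb : ∀ i, b i ∈ Set.range j)
    (hfin : (j ⁻¹' fundamentalDomain b).Finite) (hN : (j ⁻¹' fundamentalDomain b).ncard = N)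
    (hK : {x ∈ j ⁻¹' fundamentalDomain b | b.repr (j x) i = 0}.ncard = K)
    {l : ℕ} (hl : l < N / K) :
    {x ∈ j ⁻¹' fundamentalDomain b | b.repr (j x) i = ((l * K : ℕ) : ℝ) / N}.ncard = K := by
  have := finite_quotient_preimageLattice hj hb hfin
  rw [← hN, ← hK, ← card_quotient_preimageLattice hj hb, ← card_ker_coordCircle hj hb] at *
  have ht := Nat.cast_mul_div_mem_Ico Nat.card_pos hl
  obtain ⟨q, hq⟩ := ((coordCircle b j i).coe_mem_range_iff_of_addCircle ht).mpr ⟨l, hl, rfl⟩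
  rw [ncard_repr_eq_card_preimage hj hb i ht, ← hq]
  exact Nat.card_congr ((coordCircle b j i).fiberEquivKer q)

end ZSpan

open ZSpan

def coe3Hom : (Fin 3 → ℤ) →+ (Fin 3 → ℝ) := (Int.castAddHom ℝ).compLeft (Fin 3)

theorem coe3Hom_apply (x : Fin 3 → ℤ) : coe3Hom x = coe3 x := rfl

theorem coe3_injective : Function.Injective coe3 := fun _ _ h ↦
  funext fun i ↦ Int.cast_injective (congrFun h i)

theorem finite_preimage_coe3Hom {s : Set (Fin 3 → ℝ)} (hs : Bornology.IsBounded s) :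
    (coe3Hom ⁻¹' s).Finite := by
  have hmem (x : Fin 3 → ℤ) : coe3Hom x ∈ span ℤ (Set.range (Pi.basisFun ℝ (Fin 3))) :=
    ((Pi.basisFun ℝ (Fin 3)).mem_span_iff_repr_mem ℤ _).mpr fun i ↦ ⟨x i, by simp [coe3Hom]⟩
  exact ((setFinite_inter (Pi.basisFun ℝ (Fin 3)) hs).preimage coe3_injective.injOn).subset
    fun x hx ↦ ⟨hx, hmem x⟩

section Basis

variable (B : Basis (Fin 3) ℝ (Fin 3 → ℝ))

theorem eq_smul_add_smul_add_smul_iff {m : Fin 3 → ℝ} {a b c : ℝ} :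
    m = a • B 0 + b • B 1 + c • B 2 ↔ B.repr m 0 = a ∧ B.repr m 1 = b ∧ B.repr m 2 = c := by
  constructor
  · rintro rfl
    simp
  · rintro ⟨rfl, rfl, rfl⟩
    rw [← Fin.sum_univ_three (fun i ↦ B.repr m i • B i), B.sum_repr]

theorem mem_fundamentalDomain_iff {m : Fin 3 → ℝ} : m ∈ fundamentalDomain B ↔
    B.repr m 0 ∈ Set.Ico 0 1 ∧ B.repr m 1 ∈ Set.Ico 0 1 ∧ B.repr m 2 ∈ Set.Ico 0 1 := by
  simp [mem_fundamentalDomain, Fin.forall_fin_succ]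

theorem para3_eq_fundamentalDomain : para3 (B 0) (B 1) (B 2) = fundamentalDomain B := by
  ext m
  simp only [para3, Set.mem_ofPred_eq, eq_smul_add_smul_add_smul_iff, mem_fundamentalDomain_iff]
  grind

theorem para2_one_two_eq :
    para2 (B 1) (B 2) = {m ∈ fundamentalDomain B | B.repr m 0 = 0} := by
  ext m
  have h (s t : ℝ) :
      m = s • B 1 + t • B 2 ↔ B.repr m 0 = 0 ∧ B.repr m 1 = s ∧ B.repr m 2 = t := by
    simpa using eq_smul_add_smul_add_smul_iff B (a := 0)
  simp only [para2, Set.mem_ofPred_eq, h, mem_fundamentalDomain_iff]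
  grind

theorem para2_zero_two_eq :
    para2 (B 0) (B 2) = {m ∈ fundamentalDomain B | B.repr m 1 = 0} := by
  ext m
  have h (s t : ℝ) :
      m = s • B 0 + t • B 2 ↔ B.repr m 0 = s ∧ B.repr m 1 = 0 ∧ B.repr m 2 = t := by
    simpa using eq_smul_add_smul_add_smul_iff B (b := 0)
  simp only [para2, Set.mem_ofPred_eq, h, mem_fundamentalDomain_iff]
  grind

theorem para2_zero_one_eq :
    para2 (B 0) (B 1) = {m ∈ fundamentalDomain B | B.repr m 2 = 0} := by
  ext m
  have h (s t : ℝ) :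
      m = s • B 0 + t • B 1 ↔ B.repr m 0 = s ∧ B.repr m 1 = t ∧ B.repr m 2 = 0 := by
    simpa using eq_smul_add_smul_add_smul_iff B (c := 0)
  simp only [para2, Set.mem_ofPred_eq, h, mem_fundamentalDomain_iff]
  grind

end Basis

section EdgeBasis

variable {w₁ w₂ w₃ : Fin 3 → ℤ} (hli : LinearIndependent ℝ ![coe3 w₁, coe3 w₂, coe3 w₃])

def edgeBasis : Basis (Fin 3) ℝ (Fin 3 → ℝ) :=
  basisOfLinearIndependentOfCardEqFinrank hli (by simp)

theorem edgeBasis_zero : edgeBasis hli 0 = coe3 w₁ := by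
  simp [edgeBasis, coe_basisOfLinearIndependentOfCardEqFinrank]

theorem edgeBasis_one : edgeBasis hli 1 = coe3 w₂ := by
  simp [edgeBasis, coe_basisOfLinearIndependentOfCardEqFinrank]

theorem edgeBasis_two : edgeBasis hli 2 = coe3 w₃ := by
  simp [edgeBasis, coe_basisOfLinearIndependentOfCardEqFinrank]

theorem edgeBasis_mem_range_coe3Hom (i : Fin 3) : edgeBasis hli i ∈ Set.range coe3Hom := by
  fin_cases i
  exacts [⟨w₁, (edgeBasis_zero hli).symm⟩, ⟨w₂, (edgeBasis_one hli).symm⟩,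
    ⟨w₃, (edgeBasis_two hli).symm⟩]

theorem H3pts_eq_preimage :
    H3pts w₁ w₂ w₃ = coe3Hom ⁻¹' fundamentalDomain (edgeBasis hli) := by
  rw [H3pts, ← edgeBasis_zero hli, ← edgeBasis_one hli, ← edgeBasis_two hli,
    para3_eq_fundamentalDomain]
  rfl

theorem H2pts_eq_setOf_repr_zero_eq_zero :
    H2pts w₂ w₃ = {x ∈ coe3Hom ⁻¹' fundamentalDomain (edgeBasis hli) |
      (edgeBasis hli).repr (coe3Hom x) 0 = 0} := by
  rw [H2pts, ← edgeBasis_one hli, ← edgeBasis_two hli, para2_one_two_eq]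
  rfl

theorem H2pts_eq_setOf_repr_one_eq_zero :
    H2pts w₁ w₃ = {x ∈ coe3Hom ⁻¹' fundamentalDomain (edgeBasis hli) |
      (edgeBasis hli).repr (coe3Hom x) 1 = 0} := by
  rw [H2pts, ← edgeBasis_zero hli, ← edgeBasis_two hli, para2_zero_two_eq]
  rfl

theorem H2pts_eq_setOf_repr_two_eq_zero :
    H2pts w₁ w₂ = {x ∈ coe3Hom ⁻¹' fundamentalDomain (edgeBasis hli) |
      (edgeBasis hli).repr (coe3Hom x) 2 = 0} := by
  rw [H2pts, ← edgeBasis_zero hli, ← edgeBasis_one hli, para2_zero_one_eq]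
  rfl

theorem coe3_eq_smul_add_smul_add_smul_iff {x : Fin 3 → ℤ} {a b c : ℝ} :
    coe3 x = a • coe3 w₁ + b • coe3 w₂ + c • coe3 w₃ ↔
      (edgeBasis hli).repr (coe3Hom x) 0 = a ∧ (edgeBasis hli).repr (coe3Hom x) 1 = b ∧
        (edgeBasis hli).repr (coe3Hom x) 2 = c := by
  rw [← edgeBasis_zero hli, ← edgeBasis_one hli, ← edgeBasis_two hli, coe3Hom_apply]
  exact eq_smul_add_smul_add_smul_iff _

end EdgeBasis

theorem coordinates_of_H_points_general (w₁ w₂ w₃ : Fin 3 → ℤ)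
    (hli : LinearIndependent ℝ ![coe3 w₁, coe3 w₂, coe3 w₃])
    (μ μ₁ μ₂ μ₃ : ℕ)
    (hμ : μ = (H3pts w₁ w₂ w₃).ncard)
    (hμ₁ : μ₁ = (H2pts w₂ w₃).ncard) (hμ₂ : μ₂ = (H2pts w₁ w₃).ncard)
    (hμ₃ : μ₃ = (H2pts w₁ w₂).ncard) :
    (∀ h ∈ H3pts w₁ w₂ w₃, ∀ h₁ h₂ h₃ : ℝ,
      coe3 h = h₁ • coe3 w₁ + h₂ • coe3 w₂ + h₃ • coe3 w₃ →
      (∃ l : ℕ, l < μ / μ₁ ∧ h₁ = ((l * μ₁ : ℕ) : ℝ) / (μ : ℝ)) ∧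
      (∃ l : ℕ, l < μ / μ₂ ∧ h₂ = ((l * μ₂ : ℕ) : ℝ) / (μ : ℝ)) ∧
      (∃ l : ℕ, l < μ / μ₃ ∧ h₃ = ((l * μ₃ : ℕ) : ℝ) / (μ : ℝ))) ∧
    (∀ l : ℕ, l < μ / μ₁ →
      {h : Fin 3 → ℤ | h ∈ H3pts w₁ w₂ w₃ ∧ ∃ h₂ h₃ : ℝ,
        coe3 h = (((l * μ₁ : ℕ) : ℝ) / (μ : ℝ)) • coe3 w₁ + h₂ • coe3 w₂ +
          h₃ • coe3 w₃}.ncard = μ₁) ∧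
    (∀ l : ℕ, l < μ / μ₂ →
      {h : Fin 3 → ℤ | h ∈ H3pts w₁ w₂ w₃ ∧ ∃ h₁ h₃ : ℝ,
        coe3 h = h₁ • coe3 w₁ + (((l * μ₂ : ℕ) : ℝ) / (μ : ℝ)) • coe3 w₂ +
          h₃ • coe3 w₃}.ncard = μ₂) ∧
    (∀ l : ℕ, l < μ / μ₃ →
      {h : Fin 3 → ℤ | h ∈ H3pts w₁ w₂ w₃ ∧ ∃ h₁ h₂ : ℝ,
        coe3 h = h₁ • coe3 w₁ + h₂ • coe3 w₂ +
          (((l * μ₃ : ℕ) : ℝ) / (μ : ℝ)) • coe3 w₃}.ncard = μ₃) := by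
  rw [H3pts_eq_preimage hli] at hμ ⊢
  rw [H2pts_eq_setOf_repr_zero_eq_zero hli] at hμ₁
  rw [H2pts_eq_setOf_repr_one_eq_zero hli] at hμ₂
  rw [H2pts_eq_setOf_repr_two_eq_zero hli] at hμ₃
  have hb := edgeBasis_mem_range_coe3Hom hli
  have hfin := finite_preimage_coe3Hom (fundamentalDomain_isBounded (edgeBasis hli))
  simp only [coe3_eq_smul_add_smul_add_smul_iff hli, exists_and_left, exists_eq', exists_eq_left',
    and_true]
  refine ⟨fun h hh h₁ h₂ h₃ ⟨rfl, rfl, rfl⟩ ↦ ?_, fun l hl ↦ ?_, fun l hl ↦ ?_, fun l hl ↦ ?_⟩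
  · exact ⟨exists_repr_eq_mul_div coe3_injective hb hfin hμ.symm hμ₁.symm hh,
      exists_repr_eq_mul_div coe3_injective hb hfin hμ.symm hμ₂.symm hh,
      exists_repr_eq_mul_div coe3_injective hb hfin hμ.symm hμ₃.symm hh⟩
  · exact ncard_repr_eq_mul_div coe3_injective hb hfin hμ.symm hμ₁.symm hl
  · exact ncard_repr_eq_mul_div coe3_injective hb hfin hμ.symm hμ₂.symm hl
  · exact ncard_repr_eq_mul_div coe3_injective hb hfin hμ.symm hμ₃.symm hl

/-- For every `h ∈ H = ℤ³ ∩ ◊(w₁,w₂,w₃)`, writing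
`h = h₁w₁ + h₂w₂ + h₃w₃` with `h₁,h₂,h₃ ∈ [0,1)`, the coordinate `h₁` belongs to
`{0, μ₁/μ, 2μ₁/μ, …, (μ−μ₁)/μ}`; moreover for each `l ∈ {0,…,μ/μ₁−1}` exactly `μ₁` points
`h ∈ H` satisfy `h₁ = lμ₁/μ`.  (Analogously for the coordinates `h₂` with `μ₂` and `h₃`
with `μ₃`.) -/
theorem coordinates_of_H_points (w₁ w₂ w₃ : Fin 3 → ℤ)
    (hnn₁ : ∀ i, 0 ≤ w₁ i) (hnn₂ : ∀ i, 0 ≤ w₂ i) (hnn₃ : ∀ i, 0 ≤ w₃ i)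
    (hp₁ : IsPrimitive w₁) (hp₂ : IsPrimitive w₂) (hp₃ : IsPrimitive w₃)
    (hli : LinearIndependent ℝ ![coe3 w₁, coe3 w₂, coe3 w₃])
    (μ μ₁ μ₂ μ₃ : ℕ)
    (hμ : μ = (H3pts w₁ w₂ w₃).ncard)
    (hμ₁ : μ₁ = (H2pts w₂ w₃).ncard) (hμ₂ : μ₂ = (H2pts w₁ w₃).ncard)
    (hμ₃ : μ₃ = (H2pts w₁ w₂).ncard) :
    (∀ h ∈ H3pts w₁ w₂ w₃, ∀ h₁ h₂ h₃ : ℝ,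
      coe3 h = h₁ • coe3 w₁ + h₂ • coe3 w₂ + h₃ • coe3 w₃ →
      (∃ l : ℕ, l < μ / μ₁ ∧ h₁ = ((l * μ₁ : ℕ) : ℝ) / (μ : ℝ)) ∧
      (∃ l : ℕ, l < μ / μ₂ ∧ h₂ = ((l * μ₂ : ℕ) : ℝ) / (μ : ℝ)) ∧
      (∃ l : ℕ, l < μ / μ₃ ∧ h₃ = ((l * μ₃ : ℕ) : ℝ) / (μ : ℝ))) ∧
    (∀ l : ℕ, l < μ / μ₁ →
      {h : Fin 3 → ℤ | h ∈ H3pts w₁ w₂ w₃ ∧ ∃ h₂ h₃ : ℝ,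
        coe3 h = (((l * μ₁ : ℕ) : ℝ) / (μ : ℝ)) • coe3 w₁ + h₂ • coe3 w₂ +
          h₃ • coe3 w₃}.ncard = μ₁) ∧
    (∀ l : ℕ, l < μ / μ₂ →
      {h : Fin 3 → ℤ | h ∈ H3pts w₁ w₂ w₃ ∧ ∃ h₁ h₃ : ℝ,
        coe3 h = h₁ • coe3 w₁ + (((l * μ₂ : ℕ) : ℝ) / (μ : ℝ)) • coe3 w₂ +
          h₃ • coe3 w₃}.ncard = μ₂) ∧
    (∀ l : ℕ, l < μ / μ₃ →
      {h : Fin 3 → ℤ | h ∈ H3pts w₁ w₂ w₃ ∧ ∃ h₁ h₂ : ℝ,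
        coe3 h = h₁ • coe3 w₁ + h₂ • coe3 w₂ +
          (((l * μ₃ : ℕ) : ℝ) / (μ : ℝ)) • coe3 w₃}.ncard = μ₃) :=
  coordinates_of_H_points_general w₁ w₂ w₃ hli μ μ₁ μ₂ μ₃ hμ hμ₁ hμ₂ hμ₃

end
end
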